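/- arXiv:1510.06683 — 2 statements merged into one kernel-verified Lean document; each statement's English description precedes it below -/
import Mathlib

section
/- For every 2×2 complex unitary matrix U, the number max_{j∈{0,1}} (∑_{i∈{0,1}} |U_{ij}|)² − 1 is the maximum of the l1-coherence gain C_{l1}(UρU†) − C_{l1}(ρ) over all 2×2 density matrices ρ: it is an upper bound on the gain for every density matrix, and it is attained at the pure incoherent state E_{jj} for the maximizing column index j. -/
/-!
Conjugating `E_jj` by `U` gives the rank-one matrix `u uᴴ` built from the `j`-th column `u` of `U`,
whose `l1`-coherence is `(∑ |u i|)² - ∑ |u i|² = (∑ |u i|)² - 1`; this holds in every dimension.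

For the bound in dimension two write `U = !![a, b; c, d]`. Orthogonality of the rows of `U` turns
the off-diagonal entry of `U ρ Uᴴ` into `a c̄ (ρ₀₀ - ρ₁₁) + a d̄ ρ₀₁ + b c̄ ρ₁₀`. Since
`|ρ₀₀ - ρ₁₁| ≤ tr ρ = 1` and, by AM-GM on the unit rows, `|a| |d| + |b| |c| ≤ 1`, its modulus is
at most `|a| |c| + |ρ₀₁|`, so the gain is at most `2 |a| |c| = (|a| + |c|)² - 1`.
-/

open Matrix
open scoped ComplexOrder

noncomputable def l1Coherence {n : ℕ} (A : Matrix (Fin n) (Fin n) ℂ) : ℝ :=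
  ∑ i, ∑ j, if i ≠ j then ‖A i j‖ else 0

section Unitary

variable {𝕜 n : Type*} [RCLike 𝕜] [Fintype n] [DecidableEq n]

theorem Matrix.sum_norm_sq_apply_left_of_mem_unitaryGroup {U : Matrix n n 𝕜}
    (hU : U ∈ unitaryGroup n 𝕜) (j : n) : ∑ i, ‖U i j‖ ^ 2 = 1 := by
  have h := congrFun (congrFun (mem_unitaryGroup_iff'.mp hU) j) j
  simp only [mul_apply, star_apply, RCLike.star_def, RCLike.conj_mul, one_apply_eq] at h
  exact_mod_cast h

theorem Matrix.sum_norm_sq_apply_right_of_mem_unitaryGroup {U : Matrix n n 𝕜}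
    (hU : U ∈ unitaryGroup n 𝕜) (i : n) : ∑ j, ‖U i j‖ ^ 2 = 1 := by
  simpa using sum_norm_sq_apply_left_of_mem_unitaryGroup (Unitary.star_mem hU) i

end Unitary

theorem l1Coherence_vecMulVec_star {n : ℕ} (v : Fin n → ℂ) :
    l1Coherence (vecMulVec v (star v)) = (∑ i, ‖v i‖) ^ 2 - ∑ i, ‖v i‖ ^ 2 := by
  have h (i k : Fin n) : (if i ≠ k then ‖vecMulVec v (star v) i k‖ else 0) =
      ‖v i‖ * ‖v k‖ - if i = k then ‖v i‖ * ‖v k‖ else 0 := by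
    by_cases hik : i = k <;> simp [vecMulVec_apply, hik]
  simp only [l1Coherence, h, Finset.sum_sub_distrib, Finset.sum_ite_eq, Finset.mem_univ,
    if_true, sq, Finset.sum_mul_sum]

theorem mul_single_mul_conjTranspose {n : ℕ} (U : Matrix (Fin n) (Fin n) ℂ) (j : Fin n) :
    U * single j j 1 * Uᴴ = vecMulVec (fun i ↦ U i j) (star fun i ↦ U i j) := by
  ext i k
  simp [mul_apply, single, vecMulVec_apply, ite_and]

theorem l1Coherence_diagonal {n : ℕ} (d : Fin n → ℂ) : l1Coherence (diagonal d) = 0 :=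
  Finset.sum_eq_zero fun i _ ↦ Finset.sum_eq_zero fun k _ ↦ by
    by_cases hik : i = k <;> simp [hik]

theorem l1Coherence_mul_single_mul_conjTranspose_sub {n : ℕ} {U : Matrix (Fin n) (Fin n) ℂ}
    (hU : U ∈ unitaryGroup (Fin n) ℂ) (j : Fin n) :
    l1Coherence (U * single j j 1 * Uᴴ) - l1Coherence (single j j (1 : ℂ)) =
      (∑ i, ‖U i j‖) ^ 2 - 1 := by
  rw [mul_single_mul_conjTranspose, l1Coherence_vecMulVec_star, ← diagonal_single,
    l1Coherence_diagonal, sum_norm_sq_apply_left_of_mem_unitaryGroup hU, sub_zero]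

theorem l1Coherence_fin_two (A : Matrix (Fin 2) (Fin 2) ℂ) :
    l1Coherence A = ‖A 0 1‖ + ‖A 1 0‖ := by
  simp [l1Coherence, Fin.sum_univ_two]

theorem Matrix.IsHermitian.l1Coherence_fin_two {A : Matrix (Fin 2) (Fin 2) ℂ}
    (hA : A.IsHermitian) : l1Coherence A = 2 * ‖A 0 1‖ := by
  rw [_root_.l1Coherence_fin_two, ← hA.apply 0 1, norm_star]
  ring

theorem RCLike.norm_sub_le_norm_add_of_nonneg {K : Type*} [RCLike K] {x y : K} (hx : 0 ≤ x)
    (hy : 0 ≤ y) : ‖x - y‖ ≤ ‖x + y‖ := by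
  obtain ⟨r, hr, rfl⟩ := RCLike.nonneg_iff_exists_ofReal.mp hx
  obtain ⟨s, hs, rfl⟩ := RCLike.nonneg_iff_exists_ofReal.mp hy
  rw [← RCLike.ofReal_sub, ← RCLike.ofReal_add, RCLike.norm_ofReal, RCLike.norm_ofReal,
    abs_of_nonneg (add_nonneg hr hs)]
  exact abs_sub_le_iff.mpr ⟨by linarith, by linarith⟩

theorem mul_mul_conjTranspose_apply_zero_one_fin_two {U : Matrix (Fin 2) (Fin 2) ℂ}
    (hU : U * Uᴴ = 1) (ρ : Matrix (Fin 2) (Fin 2) ℂ) :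
    (U * ρ * Uᴴ) 0 1 = U 0 0 * star (U 1 0) * (ρ 0 0 - ρ 1 1) +
      U 0 0 * star (U 1 1) * ρ 0 1 + U 0 1 * star (U 1 0) * ρ 1 0 := by
  have horth : U 0 0 * star (U 1 0) + U 0 1 * star (U 1 1) = 0 := by
    simpa [mul_apply, Fin.sum_univ_two] using congrFun (congrFun hU 0) 1
  simp only [mul_apply, Fin.sum_univ_two, conjTranspose_apply]
  linear_combination ρ 1 1 * horth

theorem norm_mul_mul_conjTranspose_apply_zero_one_le {U ρ : Matrix (Fin 2) (Fin 2) ℂ}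
    (hU : U ∈ unitaryGroup (Fin 2) ℂ) (hρ : ρ.PosSemidef) (htr : ρ.trace = 1) :
    ‖(U * ρ * Uᴴ) 0 1‖ ≤ ‖U 0 0‖ * ‖U 1 0‖ + ‖ρ 0 1‖ := by
  have hdiag : ‖ρ 0 0 - ρ 1 1‖ ≤ 1 := calc
    ‖ρ 0 0 - ρ 1 1‖ ≤ ‖ρ 0 0 + ρ 1 1‖ :=
      RCLike.norm_sub_le_norm_add_of_nonneg hρ.diag_nonneg hρ.diag_nonneg
    _ = 1 := by rw [← trace_fin_two, htr, norm_one]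
  have hoff : ‖ρ 1 0‖ = ‖ρ 0 1‖ := by rw [← hρ.isHermitian.apply 1 0, norm_star]
  have hrows : ‖U 0 0‖ * ‖U 1 1‖ + ‖U 0 1‖ * ‖U 1 0‖ ≤ 1 := by
    have h0 := sum_norm_sq_apply_right_of_mem_unitaryGroup hU 0
    have h1 := sum_norm_sq_apply_right_of_mem_unitaryGroup hU 1
    simp only [Fin.sum_univ_two] at h0 h1
    nlinarith [two_mul_le_add_sq ‖U 0 0‖ ‖U 1 1‖, two_mul_le_add_sq ‖U 0 1‖ ‖U 1 0‖]
  rw [mul_mul_conjTranspose_apply_zero_one_fin_two hU.2]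
  refine norm_add₃_le.trans ?_
  simp only [norm_mul, norm_star, hoff]
  nlinarith [mul_le_mul_of_nonneg_left hdiag (by positivity : 0 ≤ ‖U 0 0‖ * ‖U 1 0‖),
    mul_le_mul_of_nonneg_right hrows (norm_nonneg (ρ 0 1))]

theorem l1Coherence_mul_mul_conjTranspose_sub_le {U ρ : Matrix (Fin 2) (Fin 2) ℂ}
    (hU : U ∈ unitaryGroup (Fin 2) ℂ) (hρ : ρ.PosSemidef) (htr : ρ.trace = 1) :
    l1Coherence (U * ρ * Uᴴ) - l1Coherence ρ ≤ (∑ i, ‖U i 0‖) ^ 2 - 1 := by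
  have hcol := sum_norm_sq_apply_left_of_mem_unitaryGroup hU 0
  rw [Fin.sum_univ_two] at hcol ⊢
  rw [(hρ.mul_mul_conjTranspose_same U).isHermitian.l1Coherence_fin_two,
    hρ.isHermitian.l1Coherence_fin_two]
  linarith [norm_mul_mul_conjTranspose_apply_zero_one_le hU hρ htr]

/-- For a 2×2 unitary `U`, the quantity `max_j (∑_i |U i j|)² − 1` is an upper
bound on the `l1`-coherence gain over all density matrices, and it is attained
at a pure incoherent state `E_jj`. -/
theorem coherence_power_qubit_formula
    (U : Matrix (Fin 2) (Fin 2) ℂ) (hU : U ∈ Matrix.unitaryGroup (Fin 2) ℂ) :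
    (∀ ρ : Matrix (Fin 2) (Fin 2) ℂ, ρ.PosSemidef → ρ.trace = 1 →
      l1Coherence (U * ρ * Uᴴ) - l1Coherence ρ ≤
        max ((∑ i, ‖U i 0‖) ^ 2) ((∑ i, ‖U i 1‖) ^ 2) - 1) ∧
    (∃ j : Fin 2,
      l1Coherence (U * Matrix.single j j 1 * Uᴴ) -
          l1Coherence (Matrix.single j j 1) =
        max ((∑ i, ‖U i 0‖) ^ 2) ((∑ i, ‖U i 1‖) ^ 2) - 1) := by
  refine ⟨fun ρ hρ htr ↦ (l1Coherence_mul_mul_conjTranspose_sub_le hU hρ htr).trans ?_, ?_⟩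
  · exact sub_le_sub_right (le_max_left _ _) 1
  rcases le_total ((∑ i, ‖U i 1‖) ^ 2) ((∑ i, ‖U i 0‖) ^ 2) with h | h
  · exact ⟨0, by rw [l1Coherence_mul_single_mul_conjTranspose_sub hU, max_eq_left h]⟩
  · exact ⟨1, by rw [l1Coherence_mul_single_mul_conjTranspose_sub hU, max_eq_right h]⟩
end

section
/- For every N×N density matrix ρ (N ≥ 1), the l1-coherence satisfies C_{l1}(ρ) = ∑_{i≠j} |ρ_{ij}| ≤ N − 1. -/
open Matrix
open scoped ComplexOrder

/-!
Every `2 × 2` principal submatrix of a positive semidefinite matrix has nonnegative determinant,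
so `|ρᵢⱼ|² ≤ ρᵢᵢ ρⱼⱼ`, and by AM–GM `2 |ρᵢⱼ| ≤ ρᵢᵢ + ρⱼⱼ`. Summing over `i ≠ j`, each diagonal
entry occurs `2 (N - 1)` times, so twice the coherence is at most `2 (N - 1) tr ρ`.
-/

namespace Matrix.PosSemidef

variable {n 𝕜 : Type*} [RCLike 𝕜] {A : Matrix n n 𝕜}

theorem norm_apply_sq_le (hA : A.PosSemidef) (i j : n) :
    ‖A i j‖ ^ 2 ≤ RCLike.re (A i i) * RCLike.re (A j j) := by
  have hdet := (hA.submatrix ![i, j]).det_nonneg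
  rw [det_fin_two, RCLike.nonneg_iff] at hdet
  have hji : A j i = star (A i j) := (hA.isHermitian.apply j i).symm
  simp only [submatrix_apply, cons_val_zero, cons_val_one, hji, RCLike.star_def,
    RCLike.mul_conj] at hdet
  rw [← hA.isHermitian.coe_re_apply_self i, ← hA.isHermitian.coe_re_apply_self j] at hdet
  norm_cast at hdet
  simpa [sub_nonneg] using hdet.1

theorem two_mul_norm_apply_le (hA : A.PosSemidef) (i j : n) :
    2 * ‖A i j‖ ≤ RCLike.re (A i i) + RCLike.re (A j j) := by
  have hi : 0 ≤ RCLike.re (A i i) := (RCLike.nonneg_iff.mp hA.diag_nonneg).1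
  have hj : 0 ≤ RCLike.re (A j j) := (RCLike.nonneg_iff.mp hA.diag_nonneg).1
  nlinarith [hA.norm_apply_sq_le i j, sq_nonneg (RCLike.re (A i i) - RCLike.re (A j j)),
    norm_nonneg (A i j)]

end Matrix.PosSemidef

theorem Fintype.sum_sum_ite_ne_add {ι R : Type*} [Fintype ι] [DecidableEq ι] [CommRing R]
    (d : ι → R) :
    ∑ i, ∑ j, (if i ≠ j then d i + d j else 0) = 2 * (Fintype.card ι - 1) * ∑ i, d i := by
  have h (i j : ι) :
      (if i ≠ j then d i + d j else 0) = d i + d j - if i = j then d i + d j else 0 := by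
    split_ifs <;> simp_all
  simp only [h, Finset.sum_sub_distrib, Finset.sum_ite_eq, Finset.mem_univ, if_true,
    Finset.sum_add_distrib, Finset.sum_const, Finset.card_univ, nsmul_eq_mul, ← Finset.mul_sum]
  ring

theorem l1Coherence_le_of_posSemidef {n : ℕ} {A : Matrix (Fin n) (Fin n) ℂ}
    (hA : A.PosSemidef) : l1Coherence A ≤ (n - 1) * A.trace.re := by
  suffices 2 * l1Coherence A ≤ 2 * (n - 1) * A.trace.re by linarith
  calc 2 * l1Coherence A = ∑ i, ∑ j, if i ≠ j then 2 * ‖A i j‖ else 0 := by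
        simp only [l1Coherence, Finset.mul_sum, mul_ite, mul_zero]
    _ ≤ ∑ i, ∑ j, if i ≠ j then (A i i).re + (A j j).re else 0 := by
        refine Finset.sum_le_sum fun i _ ↦ Finset.sum_le_sum fun j _ ↦ ?_
        split_ifs
        exacts [hA.two_mul_norm_apply_le i j, le_rfl]
    _ = 2 * (n - 1) * A.trace.re := by
        rw [Fintype.sum_sum_ite_ne_add, Fintype.card_fin, trace, Complex.re_sum]
        rfl

theorem l1Coherence_le_dim_sub_one_general
    (N : ℕ) (ρ : Matrix (Fin N) (Fin N) ℂ)
    (hρ : ρ.PosSemidef) (htr : ρ.trace = 1) :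
    l1Coherence ρ ≤ (N : ℝ) - 1 := by
  simpa [htr] using l1Coherence_le_of_posSemidef hρ

/-- For every `N×N` density matrix `ρ`, the `l1`-coherence is at most `N − 1`. -/
theorem l1Coherence_le_dim_sub_one
    (N : ℕ) (hN : 1 ≤ N) (ρ : Matrix (Fin N) (Fin N) ℂ)
    (hρ : ρ.PosSemidef) (htr : ρ.trace = 1) :
    l1Coherence ρ ≤ (N : ℝ) - 1 :=
  l1Coherence_le_dim_sub_one_general N ρ hρ htr
end
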